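/- arXiv:cs/9809081 — 11 statements merged into one kernel-verified Lean document; each statement's English description precedes it below -/
import Mathlib

section
/- Let κ₁, …, κₙ be nested convex families in ℝ^d, let A ⊆ {1,…,n} be nonempty, and suppose ⋂_{i∈A} κᵢ(t₀) is nonempty for some t₀ ≥ 0. Let t*_A = inf { t ≥ 0 | ⋂_{i∈A} κᵢ(t) ≠ ∅ }, and let x*_A be the lexicographically least point of the compact set ⋂_{i∈A} κᵢ(t*_A), i.e. x*_A belongs to this set and precedes every other point of the set in the lexicographic order on coordinates. Then for any index j ∈ {1,…,n}, one has t*_{A∪{j}} = t*_A and x*_{A∪{j}} = x*_A if and only if x*_A ∈ κⱼ(t*_A). -/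
/-- A nested convex family in `ℝ^d`. -/
def IsNestedConvexFamily (d : ℕ) (κ : ℝ → Set (EuclideanSpace ℝ (Fin d))) : Prop :=
  (∀ t : ℝ, 0 ≤ t → IsCompact (κ t)) ∧
  (∀ t : ℝ, 0 ≤ t → Convex ℝ (κ t)) ∧
  (∀ a b : ℝ, 0 ≤ a → a ≤ b → κ a ⊆ κ b) ∧
  (∀ t : ℝ, 0 ≤ t → κ t = ⋂ t' ∈ Set.Ioi t, κ t')

/-- Lexicographic order on points of `ℝ^d`, by coordinates. -/
def LexLE {d : ℕ} (x y : EuclideanSpace ℝ (Fin d)) : Prop :=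
  x = y ∨ ∃ i : Fin d, x i < y i ∧ ∀ j : Fin d, j < i → x j = y j

/-- `x` is the lexicographically least point of the set `s`. -/
def IsLexLeast {d : ℕ} (s : Set (EuclideanSpace ℝ (Fin d)))
    (x : EuclideanSpace ℝ (Fin d)) : Prop :=
  x ∈ s ∧ ∀ y ∈ s, LexLE x y

lemma lexle_antisymm {d : ℕ} {x y : EuclideanSpace ℝ (Fin d)}
    (h1 : LexLE x y) (h2 : LexLE y x) : x = y := by
  rcases h1 with rfl | ⟨i, hi, hbi⟩
  · rfl
  rcases h2 with rfl | ⟨i', hi', hbi'⟩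
  · rfl
  rcases lt_trichotomy i i' with h | h | h
  · have := hbi' i h
    linarith
  · subst h
    linarith
  · have := hbi i' h
    linarith

theorem glp_locality {d n : ℕ} (κ : Fin n → ℝ → Set (EuclideanSpace ℝ (Fin d)))
    (hκ : ∀ i, IsNestedConvexFamily d (κ i))
    (A : Finset (Fin n)) (hA : A.Nonempty)
    (t₀ : ℝ) (ht₀ : 0 ≤ t₀) (hne : (⋂ i ∈ A, κ i t₀).Nonempty)
    (j : Fin n)
    (tA tAj : ℝ)
    (htA : tA = sInf {t : ℝ | 0 ≤ t ∧ (⋂ i ∈ A, κ i t).Nonempty})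
    (htAj : tAj = sInf {t : ℝ | 0 ≤ t ∧ (⋂ i ∈ insert j A, κ i t).Nonempty})
    (xA xAj : EuclideanSpace ℝ (Fin d))
    (hxA : IsLexLeast (⋂ i ∈ A, κ i tA) xA)
    (hxAj : IsLexLeast (⋂ i ∈ insert j A, κ i tAj) xAj) :
    (tAj = tA ∧ xAj = xA) ↔ xA ∈ κ j tA := by
  set SA : Set ℝ := {t : ℝ | 0 ≤ t ∧ (⋂ i ∈ A, κ i t).Nonempty} with hSA
  set SAj : Set ℝ := {t : ℝ | 0 ≤ t ∧ (⋂ i ∈ insert j A, κ i t).Nonempty} with hSAj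
  have hbdd : BddBelow SA := ⟨0, fun t ht => ht.1⟩
  have hbddj : BddBelow SAj := ⟨0, fun t ht => ht.1⟩
  have hSAne : SA.Nonempty := ⟨t₀, ht₀, hne⟩
  have hsub : SAj ⊆ SA := by
    intro t ht
    refine ⟨ht.1, ?_⟩
    obtain ⟨x, hx⟩ := ht.2
    refine ⟨x, ?_⟩
    rw [Set.mem_iInter₂] at hx ⊢
    exact fun i hi => hx i (Finset.mem_insert_of_mem hi)
  have htA0 : 0 ≤ tA := htA ▸ le_csInf hSAne (fun t ht => ht.1)
  constructor
  · rintro ⟨rfl, rfl⟩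
    have := hxAj.1
    rw [Set.mem_iInter₂] at this
    exact this j (Finset.mem_insert_self j A)
  · intro hxj
    have hxAmem : ∀ i ∈ A, xA ∈ κ i tA := by
      have := hxA.1; rw [Set.mem_iInter₂] at this; exact this
    have hxAmemj : xA ∈ ⋂ i ∈ insert j A, κ i tA := by
      rw [Set.mem_iInter₂]
      intro i hi
      rcases Finset.mem_insert.mp hi with rfl | hi
      · exact hxj
      · exact hxAmem i hi
    have htAmem : tA ∈ SAj := ⟨htA0, ⟨xA, hxAmemj⟩⟩
    have h1 : tAj ≤ tA := htAj ▸ csInf_le hbddj htAmem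
    have h2 : tA ≤ tAj := by
      rw [htA, htAj]
      exact csInf_le_csInf hbdd ⟨tA, htAmem⟩ hsub
    have heq : tAj = tA := le_antisymm h1 h2
    subst heq
    refine ⟨rfl, ?_⟩
    have hxAjA : xAj ∈ ⋂ i ∈ A, κ i tAj := by
      have := hxAj.1
      rw [Set.mem_iInter₂] at this ⊢
      exact fun i hi => this i (Finset.mem_insert_of_mem hi)
    exact lexle_antisymm (hxAj.2 xA hxAmemj) (hxA.2 xAj hxAjA)
end

section
/- Let κ₁, …, κₙ be nested convex families in ℝ^d with n ≥ 1, suppose ⋂_{i=1}^{n} κᵢ(t₀) is nonempty for some t₀ ≥ 0, and let t* = inf { t ≥ 0 | ⋂_{i=1}^{n} κᵢ(t) ≠ ∅ }. Then there exists a nonempty subset B ⊆ {1,…,n} with |B| ≤ d + 1 such that inf { t ≥ 0 | ⋂_{i∈B} κᵢ(t) ≠ ∅ } = t*. -/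
theorem basis_for_t {d n : ℕ} (hn : 1 ≤ n)
    (κ : Fin n → ℝ → Set (EuclideanSpace ℝ (Fin d)))
    (hκ : ∀ i, IsNestedConvexFamily d (κ i))
    (t₀ : ℝ) (ht₀ : 0 ≤ t₀) (hne : (⋂ i : Fin n, κ i t₀).Nonempty)
    (tStar : ℝ)
    (htStar : tStar = sInf {t : ℝ | 0 ≤ t ∧ (⋂ i : Fin n, κ i t).Nonempty}) :
    ∃ B : Finset (Fin n), B.Nonempty ∧ B.card ≤ d + 1 ∧
      sInf {t : ℝ | 0 ≤ t ∧ (⋂ i ∈ B, κ i t).Nonempty} = tStar := by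
  classical
  set S : Set ℝ := {t : ℝ | 0 ≤ t ∧ (⋂ i : Fin n, κ i t).Nonempty} with hS
  have hSne : S.Nonempty := ⟨t₀, ht₀, hne⟩
  have hSbdd : BddBelow S := ⟨0, fun t ht => ht.1⟩
  have htStar0 : 0 ≤ tStar := htStar ▸ le_csInf hSne (fun t ht => ht.1)
  have i₀ : Fin n := ⟨0, hn⟩
  -- monotonicity of the big intersection
  have hmono : ∀ a b : ℝ, 0 ≤ a → a ≤ b → ∀ B : Finset (Fin n),
      (⋂ i ∈ B, κ i a) ⊆ ⋂ i ∈ B, κ i b := by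
    intro a b ha hab B
    exact Set.iInter₂_mono fun i _ => (hκ i).2.2.1 a b ha hab
  -- every t in [0, tStar) has empty intersection
  have hempty : ∀ t : ℝ, 0 ≤ t → t < tStar → ¬ (⋂ i : Fin n, κ i t).Nonempty := by
    intro t ht hlt hcontra
    have : t ∈ S := ⟨ht, hcontra⟩
    have : tStar ≤ t := htStar ▸ csInf_le hSbdd this
    linarith
  -- the intersection at tStar is nonempty
  have hStarNe : (⋂ i : Fin n, κ i tStar).Nonempty := by
    have hrw : (⋂ i : Fin n, κ i tStar) = ⋂ t : {t : ℝ // tStar < t}, ⋂ i : Fin n, κ i t := by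
      ext x
      simp only [Set.mem_iInter, Subtype.forall]
      constructor
      · intro h t ht i
        have := (hκ i).2.2.2 tStar htStar0
        have hx := h i
        rw [this] at hx
        simp only [Set.mem_iInter] at hx
        exact hx t ht
      · intro h i
        have := (hκ i).2.2.2 tStar htStar0
        rw [this]
        simp only [Set.mem_iInter]
        exact fun t ht => h t ht i
    rw [hrw]
    have : Nonempty {t : ℝ // tStar < t} := ⟨⟨tStar + 1, by linarith⟩⟩
    apply IsCompact.nonempty_iInter_of_directed_nonempty_isCompact_isClosed
    · intro a b
      refine ⟨⟨min a.1 b.1, lt_min a.2 b.2⟩, ?_, ?_⟩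
      · exact Set.iInter_mono fun i => (hκ i).2.2.1 (min a.1 b.1) a.1
          (le_trans htStar0 (lt_min a.2 b.2).le) (min_le_left _ _)
      · exact Set.iInter_mono fun i => (hκ i).2.2.1 (min a.1 b.1) b.1
          (le_trans htStar0 (lt_min a.2 b.2).le) (min_le_right _ _)
    · rintro ⟨t, ht⟩
      have : sInf S < t := htStar ▸ ht
      obtain ⟨s, hsS, hst⟩ := exists_lt_of_csInf_lt hSne this
      obtain ⟨x, hx⟩ := hsS.2
      exact ⟨x, Set.mem_iInter.mpr fun i =>
        (hκ i).2.2.1 s t hsS.1 hst.le (Set.mem_iInter.mp hx i)⟩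
    · rintro ⟨t, ht⟩
      exact IsCompact.of_isClosed_subset ((hκ i₀).1 t (le_trans htStar0 ht.le))
        (isClosed_iInter fun i => ((hκ i).1 t (le_trans htStar0 ht.le)).isClosed)
        (Set.iInter_subset _ i₀)
    · rintro ⟨t, ht⟩
      exact isClosed_iInter fun i => ((hκ i).1 t (le_trans htStar0 ht.le)).isClosed
  -- the key claim: some small B already has empty intersection on [0, tStar)
  have hkey : ∃ B : Finset (Fin n), B.Nonempty ∧ B.card ≤ d + 1 ∧
      ∀ t : ℝ, 0 ≤ t → t < tStar → ¬ (⋂ i ∈ B, κ i t).Nonempty := by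
    by_contra hcon
    push_neg at hcon
    -- choice of a witness for each such B
    have hch : ∀ B : Finset (Fin n), B.Nonempty → B.card ≤ d + 1 →
        ∃ t : ℝ, 0 ≤ t ∧ t < tStar ∧ (⋂ i ∈ B, κ i t).Nonempty := by
      intro B h1 h2
      obtain ⟨t, ht0, htlt, htne⟩ := hcon B h1 h2
      exact ⟨t, ht0, htlt, htne⟩
    have htStarPos : 0 < tStar := by
      obtain ⟨t, ht0, htlt, -⟩ := hch {i₀} ⟨i₀, Finset.mem_singleton_self i₀⟩
        (by simp)
      linarith
    set g : Finset (Fin n) → ℝ := fun B =>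
      if h : B.Nonempty ∧ B.card ≤ d + 1 then (hch B h.1 h.2).choose else 0 with hg
    have hg0 : ∀ B, 0 ≤ g B := by
      intro B
      by_cases h : B.Nonempty ∧ B.card ≤ d + 1
      · simp only [hg, dif_pos h]
        exact (hch B h.1 h.2).choose_spec.1
      · simp only [hg, dif_neg h]
        exact le_refl 0
    have hglt : ∀ B, g B < tStar := by
      intro B
      by_cases h : B.Nonempty ∧ B.card ≤ d + 1
      · simp only [hg, dif_pos h]
        exact (hch B h.1 h.2).choose_spec.2.1
      · simpa only [hg, dif_neg h] using htStarPos
    have hgne : ∀ B (h1 : B.Nonempty) (h2 : B.card ≤ d + 1),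
        (⋂ i ∈ B, κ i (g B)).Nonempty := by
      intro B h1 h2
      simp only [hg, dif_pos (And.intro h1 h2)]
      exact (hch B h1 h2).choose_spec.2.2
    -- take the max of all the g B
    obtain ⟨B', -, hmax⟩ := Finset.exists_max_image Finset.univ g ⟨∅, Finset.mem_univ ∅⟩
    set t' : ℝ := g B' with ht'
    have ht'0 : 0 ≤ t' := hg0 B'
    have ht'lt : t' < tStar := hglt B'
    -- apply Helly's theorem at time t'
    have hHelly : (⋂ i ∈ (Finset.univ : Finset (Fin n)), κ i t').Nonempty := by
      apply Convex.helly_theorem' (𝕜 := ℝ)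
      · exact fun i _ => (hκ i).2.1 t' ht'0
      · intro I hIss hIcard
        rcases I.eq_empty_or_nonempty with rfl | hIne
        · simp
        · rw [finrank_euclideanSpace_fin] at hIcard
          exact (hgne I hIne hIcard).mono
            (hmono (g I) t' (hg0 I) (hmax I (Finset.mem_univ I)) I)
    have : t' ∈ S := by
      refine ⟨ht'0, ?_⟩
      obtain ⟨x, hx⟩ := hHelly
      exact ⟨x, Set.mem_iInter.mpr fun i => by
        simpa using Set.mem_iInter₂.mp hx i (Finset.mem_univ i)⟩
    have : tStar ≤ t' := htStar ▸ csInf_le hSbdd this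
    linarith
  obtain ⟨B, hB1, hB2, hB3⟩ := hkey
  refine ⟨B, hB1, hB2, ?_⟩
  have hmem : tStar ∈ {t : ℝ | 0 ≤ t ∧ (⋂ i ∈ B, κ i t).Nonempty} := by
    refine ⟨htStar0, hStarNe.mono ?_⟩
    exact fun x hx => Set.mem_iInter₂.mpr fun i _ => Set.mem_iInter.mp hx i
  have hlb : ∀ t ∈ {t : ℝ | 0 ≤ t ∧ (⋂ i ∈ B, κ i t).Nonempty}, tStar ≤ t := by
    intro t ht
    by_contra hlt
    push_neg at hlt
    exact hB3 t ht.1 hlt ht.2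
  exact le_antisymm (csInf_le ⟨tStar, hlb⟩ hmem) (le_csInf ⟨tStar, hmem⟩ hlb)
end

section
/- Let κ₁, …, κₙ be nested convex families in ℝ^d with n ≥ 1, suppose ⋂_{i=1}^{n} κᵢ(t₀) is nonempty for some t₀ ≥ 0, let t* = inf { t ≥ 0 | ⋂_{i=1}^{n} κᵢ(t) ≠ ∅ }, and let x* be the lexicographically least point of ⋂_{i=1}^{n} κᵢ(t*). Then there exists a nonempty subset B ⊆ {1,…,n} with |B| ≤ 2d + 1 such that, setting t*_B = inf { t ≥ 0 | ⋂_{i∈B} κᵢ(t) ≠ ∅ }, one has t*_B = t* and the lexicographically least point of ⋂_{i∈B} κᵢ(t*_B) equals x*. -/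
open Finset Module Set

instance Pi.Lex.posSMulStrictMono {ι α : Type*} {β : ι → Type*} [LinearOrder ι] [Zero α]
    [Preorder α] [∀ i, Zero (β i)] [∀ i, PartialOrder (β i)] [∀ i, SMulWithZero α (β i)]
    [∀ i, PosSMulStrictMono α (β i)] : PosSMulStrictMono α (Lex (∀ i, β i)) where
  smul_lt_smul_of_pos_left a ha _ _ := fun ⟨i, hlt, hi⟩ =>
    ⟨i, fun j hj => congrArg (a • ·) (hlt j hj), smul_lt_smul_of_pos_left hi ha⟩

theorem Convex.exists_card_le_finrank_inter_biInter_eq_empty {𝕜 E ι : Type*} [Field 𝕜]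
    [LinearOrder 𝕜] [IsStrictOrderedRing 𝕜] [AddCommGroup E] [Module 𝕜 E] [FiniteDimensional 𝕜 E]
    [Fintype ι] {C : Set E} {K : ι → Set E} (hC : Convex 𝕜 C) (hK : ∀ i, Convex 𝕜 (K i))
    (hK_ne : (⋂ i, K i).Nonempty) (h : C ∩ ⋂ i, K i = ∅) :
    ∃ B : Finset ι, #B ≤ finrank 𝕜 E ∧ C ∩ ⋂ i ∈ B, K i = ∅ := by
  classical
  by_contra! hB
  let F : Option ι → Set E := fun o => o.elim C K
  have mem_F (I : Finset (Option ι)) (y : E) :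
      y ∈ ⋂ o ∈ I, F o ↔ (none ∈ I → y ∈ C) ∧ ∀ i ∈ I.eraseNone, y ∈ K i := by
    simp [F, Option.forall]
  obtain ⟨y, hy⟩ : (⋂ o ∈ (univ : Finset (Option ι)), F o).Nonempty := by
    refine helly_theorem' (fun o _ => o.rec hC hK) fun I _ hI => ?_
    by_cases hnone : none ∈ I
    · obtain ⟨y, hyC, hyK⟩ := hB I.eraseNone (by rw [card_eraseNone_of_mem hnone]; omega)
      exact ⟨y, (mem_F I y).2 ⟨fun _ => hyC, fun i hi => mem_iInter₂.1 hyK i hi⟩⟩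
    · obtain ⟨y, hy⟩ := hK_ne
      exact ⟨y, (mem_F I y).2 ⟨fun h => (hnone h).elim, fun i _ => mem_iInter.1 hy i⟩⟩
  have ⟨hyC, hyK⟩ := (mem_F univ y).1 hy
  exact h.subset ⟨hyC (mem_univ _), mem_iInter.2 fun i => hyK i (by simp)⟩

lemma lexLE_iff_toLex_le {d : ℕ} {x y : EuclideanSpace ℝ (Fin d)} :
    LexLE x y ↔ toLex (WithLp.ofLp x) ≤ toLex (WithLp.ofLp y) := by
  rw [le_iff_eq_or_lt, toLex_inj, (WithLp.ofLp_injective 2).eq_iff]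
  exact or_congr_right ⟨fun ⟨i, hi, h⟩ => ⟨i, h, hi⟩, fun ⟨i, h, hi⟩ => ⟨i, hi, h⟩⟩

lemma convex_setOf_toLex_lt {d : ℕ} (x : EuclideanSpace ℝ (Fin d)) :
    Convex ℝ {y : EuclideanSpace ℝ (Fin d) | toLex (WithLp.ofLp y) < toLex (WithLp.ofLp x)} :=
  (convex_Iio _).linear_preimage <|
    (toLexLinearEquiv ℝ (Fin d → ℝ)).toLinearMap ∘ₗ (WithLp.linearEquiv 2 ℝ _).toLinearMap

theorem IsLexLeast.exists_card_le {d : ℕ} {ι : Type*} [Fintype ι]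
    {K : ι → Set (EuclideanSpace ℝ (Fin d))} {x : EuclideanSpace ℝ (Fin d)}
    (hK : ∀ i, Convex ℝ (K i)) (hx : IsLexLeast (⋂ i, K i) x) :
    ∃ B : Finset ι, #B ≤ d ∧ ∀ y ∈ ⋂ i ∈ B, K i, LexLE x y := by
  have h : {y | toLex (WithLp.ofLp y) < toLex (WithLp.ofLp x)} ∩ ⋂ i, K i = ∅ :=
    eq_empty_of_forall_notMem fun y ⟨hlt, hy⟩ => (lexLE_iff_toLex_le.1 (hx.2 y hy)).not_gt hlt
  obtain ⟨B, hB, hBC⟩ := (convex_setOf_toLex_lt x).exists_card_le_finrank_inter_biInter_eq_empty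
    hK ⟨x, hx.1⟩ h
  refine ⟨B, by rwa [finrank_euclideanSpace_fin] at hB, fun y hy => ?_⟩
  exact lexLE_iff_toLex_le.2 (not_lt.1 fun hlt => hBC.subset ⟨hlt, hy⟩)

lemma IsNestedConvexFamily.convex {d : ℕ} {κ : ℝ → Set (EuclideanSpace ℝ (Fin d))}
    (hκ : IsNestedConvexFamily d κ) {t : ℝ} (ht : 0 ≤ t) : Convex ℝ (κ t) :=
  hκ.2.1 t ht

lemma IsNestedConvexFamily.monotoneOn {d : ℕ} {κ : ℝ → Set (EuclideanSpace ℝ (Fin d))}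
    (hκ : IsNestedConvexFamily d κ) : MonotoneOn κ (Ici 0) :=
  fun a ha b _ hab => hκ.2.2.1 a b ha hab

section MeetTime

variable {E ι : Type*} (κ : ι → ℝ → Set E)

/-- This is `0` if the families never meet, since `sInf ∅ = 0`. -/
noncomputable def meetTime (B : Finset ι) : ℝ :=
  sInf {t : ℝ | 0 ≤ t ∧ (⋂ i ∈ B, κ i t).Nonempty}

variable {κ}

lemma meetTime_univ [Fintype ι] :
    meetTime κ univ = sInf {t : ℝ | 0 ≤ t ∧ (⋂ i, κ i t).Nonempty} := by
  simp [meetTime]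

lemma meetTime_nonneg (B : Finset ι) : 0 ≤ meetTime κ B :=
  Real.sInf_nonneg fun _ ht => ht.1

lemma meetTime_le {B : Finset ι} {t : ℝ} (ht : 0 ≤ t) (h : (⋂ i ∈ B, κ i t).Nonempty) :
    meetTime κ B ≤ t :=
  csInf_le ⟨0, fun _ hs => hs.1⟩ ⟨ht, h⟩

lemma meetTime_mono {B C : Finset ι} (hBC : B ⊆ C) {t : ℝ} (ht : 0 ≤ t)
    (h : (⋂ i ∈ C, κ i t).Nonempty) : meetTime κ B ≤ meetTime κ C :=
  csInf_le_csInf ⟨0, fun _ hs => hs.1⟩ ⟨t, ht, h⟩ fun _ ⟨hs, hne⟩ =>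
    ⟨hs, hne.mono (biInter_subset_biInter_left hBC)⟩

lemma nonempty_of_meetTime_lt (hκ : ∀ i, MonotoneOn (κ i) (Ici 0)) {B : Finset ι} {s t : ℝ}
    (hs : 0 ≤ s) (hB : (⋂ i ∈ B, κ i s).Nonempty) (ht : meetTime κ B < t) :
    (⋂ i ∈ B, κ i t).Nonempty := by
  obtain ⟨r, ⟨hr, hne⟩, hrt⟩ := exists_lt_of_csInf_lt
    (show {t : ℝ | 0 ≤ t ∧ (⋂ i ∈ B, κ i t).Nonempty}.Nonempty from ⟨s, hs, hB⟩) ht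
  exact hne.mono <| biInter_mono Set.Subset.rfl fun i _ =>
    hκ i (mem_Ici.2 hr) (mem_Ici.2 (hr.trans hrt.le)) hrt.le

/-- A subfamily of at most `dim E + 1` members with the latest meeting time works: at any later
time all such subfamilies meet, hence by Helly's theorem so does the whole family. -/
theorem exists_meetTime_univ_le [AddCommGroup E] [Module ℝ E] [FiniteDimensional ℝ E]
    [Fintype ι] [Nonempty ι] (hconv : ∀ i t, 0 ≤ t → Convex ℝ (κ i t))
    (hmono : ∀ i, MonotoneOn (κ i) (Ici 0)) {s : ℝ} (hs : 0 ≤ s) (hne : (⋂ i, κ i s).Nonempty) :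
    ∃ B : Finset ι, B.Nonempty ∧ #B ≤ finrank ℝ E + 1 ∧ meetTime κ univ ≤ meetTime κ B := by
  obtain ⟨B, hB, hBmax⟩ :=
    (univ.filter fun B : Finset ι => B.Nonempty ∧ #B ≤ finrank ℝ E + 1).exists_max_image
      (meetTime κ) ⟨{Classical.arbitrary ι}, by simp⟩
  rw [mem_filter] at hB
  refine ⟨B, hB.2.1, hB.2.2, le_of_forall_gt_imp_ge_of_dense fun t ht => ?_⟩
  have ht0 : 0 ≤ t := (meetTime_nonneg B).trans ht.le
  refine meetTime_le ht0 <| Convex.helly_theorem' (fun i _ => hconv i t ht0) fun I _ hI => ?_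
  rcases I.eq_empty_or_nonempty with rfl | hI_ne
  · simp
  · exact nonempty_of_meetTime_lt hmono hs (hne.mono (iInter_subset_iInter₂ _ _))
      ((hBmax I (mem_filter.2 ⟨mem_univ _, hI_ne, hI⟩)).trans_lt ht)

end MeetTime

theorem basis_general_general {d n : ℕ} (hn : 1 ≤ n)
    (κ : Fin n → ℝ → Set (EuclideanSpace ℝ (Fin d)))
    (hκ : ∀ i, IsNestedConvexFamily d (κ i))
    (tStar : ℝ)
    (htStar : tStar = sInf {t : ℝ | 0 ≤ t ∧ (⋂ i : Fin n, κ i t).Nonempty})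
    (xStar : EuclideanSpace ℝ (Fin d))
    (hxStar : IsLexLeast (⋂ i : Fin n, κ i tStar) xStar) :
    ∃ B : Finset (Fin n), B.Nonempty ∧ B.card ≤ 2 * d + 1 ∧
      sInf {t : ℝ | 0 ≤ t ∧ (⋂ i ∈ B, κ i t).Nonempty} = tStar ∧
      IsLexLeast (⋂ i ∈ B, κ i (sInf {t : ℝ | 0 ≤ t ∧ (⋂ i ∈ B, κ i t).Nonempty}))
        xStar := by
  have : Nonempty (Fin n) := ⟨⟨0, hn⟩⟩
  rw [← meetTime_univ] at htStar
  have ht : 0 ≤ tStar := htStar ▸ meetTime_nonneg _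
  have hx (B : Finset (Fin n)) : xStar ∈ ⋂ i ∈ B, κ i tStar :=
    iInter_subset_iInter₂ _ _ hxStar.1
  obtain ⟨B₁, hB₁, hB₁card, hB₁le⟩ := exists_meetTime_univ_le (fun i _ => (hκ i).convex)
    (fun i => (hκ i).monotoneOn) ht ⟨xStar, hxStar.1⟩
  obtain ⟨B₂, hB₂card, hB₂⟩ := hxStar.exists_card_le fun i => (hκ i).convex ht
  have hB : meetTime κ (B₁ ∪ B₂) = tStar :=
    le_antisymm (meetTime_le ht ⟨xStar, hx _⟩)
      (htStar ▸ hB₁le.trans (meetTime_mono subset_union_left ht ⟨xStar, hx _⟩))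
  refine ⟨B₁ ∪ B₂, hB₁.mono subset_union_left, ?_, hB, ?_⟩
  · rw [finrank_euclideanSpace_fin] at hB₁card
    exact (Finset.card_union_le _ _).trans (by omega)
  · unfold meetTime at hB
    rw [hB]
    exact ⟨hx _, fun y hy => hB₂ y (biInter_subset_biInter_left Finset.subset_union_right hy)⟩

theorem basis_general {d n : ℕ} (hn : 1 ≤ n)
    (κ : Fin n → ℝ → Set (EuclideanSpace ℝ (Fin d)))
    (hκ : ∀ i, IsNestedConvexFamily d (κ i))
    (t₀ : ℝ) (ht₀ : 0 ≤ t₀) (hne : (⋂ i : Fin n, κ i t₀).Nonempty)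
    (tStar : ℝ)
    (htStar : tStar = sInf {t : ℝ | 0 ≤ t ∧ (⋂ i : Fin n, κ i t).Nonempty})
    (xStar : EuclideanSpace ℝ (Fin d))
    (hxStar : IsLexLeast (⋂ i : Fin n, κ i tStar) xStar) :
    ∃ B : Finset (Fin n), B.Nonempty ∧ B.card ≤ 2 * d + 1 ∧
      sInf {t : ℝ | 0 ≤ t ∧ (⋂ i ∈ B, κ i t).Nonempty} = tStar ∧
      IsLexLeast (⋂ i ∈ B, κ i (sInf {t : ℝ | 0 ≤ t ∧ (⋂ i ∈ B, κ i t).Nonempty}))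
        xStar :=
  basis_general_general hn κ hκ tStar htStar xStar hxStar
end

section
/- Let κ₁, …, κₙ be nested convex families in ℝ^d, each of which is either constant or continuously shrinking, let S(t) = ⋂_{i=1}^{n} κᵢ(t), suppose S(t₀) is nonempty for some t₀ ≥ 0, and let t* = inf { t ≥ 0 | S(t) ≠ ∅ }. If t* > 0, then S(t*) has empty topological interior in ℝ^d. -/
/-- The function `f_κ(x) = inf { t ≥ 0 | x ∈ κ t }` determined by a family `κ`. -/
noncomputable def famFun {d : ℕ} (κ : ℝ → Set (EuclideanSpace ℝ (Fin d)))
    (x : EuclideanSpace ℝ (Fin d)) : ℝ :=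
  sInf {t : ℝ | 0 ≤ t ∧ x ∈ κ t}

/-- The family `κ` is constant: `κ t = κ 0` for all `t ≥ 0`. -/
def IsConstantFamily {d : ℕ} (κ : ℝ → Set (EuclideanSpace ℝ (Fin d))) : Prop :=
  ∀ t : ℝ, 0 ≤ t → κ t = κ 0

/-- The family `κ` is continuously shrinking: `f_κ` is not constant on any
nonempty open set, and `κ t'` lies in the interior of `κ t` whenever `t' < t`. -/
def IsContinuouslyShrinking {d : ℕ} (κ : ℝ → Set (EuclideanSpace ℝ (Fin d))) : Prop :=
  (∀ U : Set (EuclideanSpace ℝ (Fin d)), IsOpen U → U.Nonempty →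
    ¬ ∃ c : ℝ, ∀ x ∈ U, famFun κ x = c) ∧
  (∀ t' t : ℝ, 0 ≤ t' → t' < t → κ t' ⊆ interior (κ t))

theorem empty_interior_at_inf {d n : ℕ}
    (κ : Fin n → ℝ → Set (EuclideanSpace ℝ (Fin d)))
    (hκ : ∀ i, IsNestedConvexFamily d (κ i))
    (hshrink : ∀ i, IsConstantFamily (κ i) ∨ IsContinuouslyShrinking (κ i))
    (t₀ : ℝ) (ht₀ : 0 ≤ t₀) (hne : (⋂ i : Fin n, κ i t₀).Nonempty)
    (tStar : ℝ)
    (htStar : tStar = sInf {t : ℝ | 0 ≤ t ∧ (⋂ i : Fin n, κ i t).Nonempty})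
    (htpos : 0 < tStar) :
    interior (⋂ i : Fin n, κ i tStar) = ∅ := by
  classical
  have hbdd : BddBelow {t : ℝ | 0 ≤ t ∧ (⋂ i : Fin n, κ i t).Nonempty} :=
    ⟨0, fun t ht => ht.1⟩
  by_contra hInt
  have hUne : (interior (⋂ i : Fin n, κ i tStar)).Nonempty :=
    Set.nonempty_iff_ne_empty.mpr hInt
  rcases Nat.eq_zero_or_pos n with hn | hn
  · subst hn
    have h0 : (0 : ℝ) ∈ {t : ℝ | 0 ≤ t ∧ (⋂ i : Fin 0, κ i t).Nonempty} := by
      refine ⟨le_refl 0, ?_⟩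
      simp
    have := csInf_le hbdd h0
    rw [← htStar] at this
    linarith
  haveI : Nonempty (Fin n) := Fin.pos_iff_nonempty.mp hn
  set U := interior (⋂ i : Fin n, κ i tStar) with hUdef
  have hUopen : IsOpen U := isOpen_interior
  have hxκ : ∀ y ∈ U, ∀ i, y ∈ κ i tStar := fun y hy i =>
    Set.mem_iInter.mp (interior_subset hy) i
  -- the "good" set for each index
  set E : Fin n → Set (EuclideanSpace ℝ (Fin d)) := fun i =>
    {x | ∃ s : ℝ, 0 ≤ s ∧ s < tStar ∧ x ∈ κ i s} with hEdef
  have hEopen : ∀ i, IsContinuouslyShrinking (κ i) → IsOpen (E i) := by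
    intro i hs
    rw [isOpen_iff_forall_mem_open]
    rintro x ⟨s, hs0, hslt, hxs⟩
    refine ⟨interior (κ i ((s + tStar) / 2)), ?_, isOpen_interior, ?_⟩
    · intro y hy
      exact ⟨(s + tStar) / 2, by linarith, by linarith, interior_subset hy⟩
    · exact hs.2 s ((s + tStar) / 2) hs0 (by linarith) hxs
  set D : Fin n → Set (EuclideanSpace ℝ (Fin d)) := fun i =>
    if IsContinuouslyShrinking (κ i) then E i ∪ (closure U)ᶜ else Set.univ with hDdef
  have hDopen : ∀ i, IsOpen (D i) := by
    intro i
    simp only [hDdef]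
    split
    · exact (hEopen i ‹_›).union (isClosed_closure.isOpen_compl)
    · exact isOpen_univ
  have hDdense : ∀ i, Dense (D i) := by
    intro i
    simp only [hDdef]
    split
    · rename_i hs
      rw [dense_iff_inter_open]
      intro W hW hWne
      by_cases hWU : (W ∩ U).Nonempty
      · have h1 := hs.1 (W ∩ U) (hW.inter hUopen) hWU
        push_neg at h1
        obtain ⟨x, hxWU, hfx⟩ := h1 tStar
        have htSmem : tStar ∈ {t : ℝ | 0 ≤ t ∧ x ∈ κ i t} :=
          ⟨htpos.le, hxκ x hxWU.2 i⟩
        have hle : famFun (κ i) x ≤ tStar :=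
          csInf_le ⟨0, fun t ht => ht.1⟩ htSmem
        have hlt : famFun (κ i) x < tStar := lt_of_le_of_ne hle hfx
        obtain ⟨s, hsmem, hslt⟩ := exists_lt_of_csInf_lt ⟨tStar, htSmem⟩ hlt
        exact ⟨x, hxWU.1, Or.inl ⟨s, hsmem.1, hslt, hsmem.2⟩⟩
      · obtain ⟨y, hy⟩ := hWne
        refine ⟨y, hy, Or.inr ?_⟩
        intro hyc
        rcases mem_closure_iff.mp hyc W hW hy with ⟨z, hz⟩
        exact hWU ⟨z, hz⟩
    · exact dense_univ
  have hD : Dense (⋂ i, D i) := dense_iInter_of_isOpen hDopen hDdense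
  obtain ⟨x, hxU, hxD⟩ := hD.inter_open_nonempty U hUopen hUne
  have hwit : ∀ i, ∃ s : ℝ, 0 ≤ s ∧ s < tStar ∧ x ∈ κ i s := by
    intro i
    by_cases hs : IsContinuouslyShrinking (κ i)
    · have hxDi : x ∈ D i := Set.mem_iInter.mp hxD i
      simp only [hDdef, if_pos hs] at hxDi
      rcases hxDi with h | h
      · exact h
      · exact absurd (subset_closure hxU) h
    · have hc : IsConstantFamily (κ i) := (hshrink i).resolve_right hs
      refine ⟨0, le_refl 0, htpos, ?_⟩
      have := hxκ x hxU i
      rwa [hc tStar htpos.le] at this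
  choose g hg0 hglt hgmem using hwit
  set t := Finset.univ.sup' (Finset.univ_nonempty) g with htdef
  obtain ⟨i0⟩ := ‹Nonempty (Fin n)›
  have ht0 : 0 ≤ t := le_trans (hg0 i0) (Finset.le_sup' g (Finset.mem_univ i0))
  have htlt : t < tStar :=
    (Finset.sup'_lt_iff Finset.univ_nonempty).mpr fun i _ => hglt i
  have hmem : t ∈ {s : ℝ | 0 ≤ s ∧ (⋂ i : Fin n, κ i s).Nonempty} := by
    refine ⟨ht0, ⟨x, Set.mem_iInter.mpr fun i => ?_⟩⟩
    exact (hκ i).2.2.1 (g i) t (hg0 i) (Finset.le_sup' g (Finset.mem_univ i)) (hgmem i)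
  have : tStar ≤ t := htStar ▸ csInf_le hbdd hmem
  linarith
end

section
/- Let a and b be distinct points of the Euclidean plane ℝ² and let θ be a real number with π/2 ≤ θ < π. Then the set { p ∈ ℝ² | p ≠ a, p ≠ b, and ∠(a, p, b) ≥ θ } is convex, where ∠(a, p, b) denotes the (undirected) angle at p in the triangle a p b. -/
open Real InnerProductGeometry Set Module
open scoped RealInnerProductSpace

/-!
For `p ≠ a, b` write `u = a - p`, `v = b - p`, `α = ∠(u, v)` and let `ω` be the area form of
an orientation of the plane. Since `sin (θ - α) ‖u‖ ‖v‖ = sin θ ⟪u, v⟫ - cos θ |ω u v|` and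
`θ - α ∈ (-π, π)`, the condition `θ ≤ α` says `g p ≤ 0` for
`g p = sin θ ⟪u, v⟫ - cos θ |ω u v|`. The inner product is a strictly convex quadratic in `p`,
while `ω u v` is affine in `p` (its quadratic part `ω p p` vanishes), so `g` is strictly convex
once `cos θ ≤ 0`. Hence `{g ≤ 0}` is convex and its points `a`, `b`, where `g` vanishes, are
extreme, so removing them keeps the set convex.
-/

theorem StrictConvexOn.convex_le_diff {𝕜 E β : Type*} [Semiring 𝕜] [PartialOrder 𝕜]
    [AddCommMonoid E] [AddCommMonoid β] [PartialOrder β] [IsOrderedAddMonoid β] [Module 𝕜 E]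
    [Module 𝕜 β] [PosSMulMono 𝕜 β] {s : Set E} {f : E → β} (hf : StrictConvexOn 𝕜 s f)
    {r : β} {T : Set E} (hT : ∀ x ∈ T, r ≤ f x) : Convex 𝕜 ({x ∈ s | f x ≤ r} \ T) :=
  convex_iff_pairwise_pos.2 fun x hx y hy hxy a b ha hb hab =>
    mem_sdiff_of_mem ((hf.convexOn.convex_le r) hx.1 hy.1 ha.le hb.le hab) fun hT' =>
      (hT _ hT').not_gt <|
        calc f (a • x + b • y) < a • f x + b • f y := hf.2 hx.1.1 hy.1.1 hxy ha hb hab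
          _ ≤ a • r + b • r := by gcongr; exacts [hx.1.2, hy.1.2]
          _ = r := Convex.combo_self hab r

theorem StrictConvexOn.const_mul {E : Type*} [AddCommMonoid E] [SMul ℝ E] {s : Set E}
    {f : E → ℝ} {c : ℝ} (hc : 0 < c) (hf : StrictConvexOn ℝ s f) :
    StrictConvexOn ℝ s fun x => c * f x :=
  ⟨hf.1, fun x hx y hy hxy a b ha hb hab => by
    have := mul_lt_mul_of_pos_left (hf.2 hx hy hxy ha hb hab) hc
    simp only [smul_eq_mul] at this ⊢
    linarith⟩

theorem LinearMap.apply_sub_combo_sub_combo {R M N : Type*} [CommRing R] [AddCommGroup M]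
    [Module R M] [AddCommGroup N] [Module R N] (B : M →ₗ[R] M →ₗ[R] N) (a b p q : M) {t s : R}
    (h : t + s = 1) :
    B (a - (t • p + s • q)) (b - (t • p + s • q)) =
      t • B (a - p) (b - p) + s • B (a - q) (b - q) - (t * s) • B (p - q) (p - q) := by
  obtain rfl : s = 1 - t := eq_sub_of_add_eq' h
  simp only [map_sub, map_add, map_smul, LinearMap.sub_apply, LinearMap.add_apply,
    LinearMap.smul_apply]
  module

section InnerProductSpace

variable {V : Type*} [NormedAddCommGroup V] [InnerProductSpace ℝ V]

theorem strictConvexOn_inner_sub_sub (a b : V) :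
    StrictConvexOn ℝ univ fun p => ⟪a - p, b - p⟫ := by
  refine ⟨convex_univ, fun p _ q _ hpq t s ht hs hts => ?_⟩
  have := (innerₗ V).apply_sub_combo_sub_combo a b p q hts
  simp only [innerₗ_apply_apply, smul_eq_mul] at this ⊢
  rw [this, real_inner_self_eq_norm_sq]
  have : 0 < t * s * ‖p - q‖ ^ 2 := by
    have := sub_ne_zero.2 hpq
    positivity
  linarith

theorem le_angle_iff_sin_mul_inner_le {x y : V} (hx : x ≠ 0) (hy : y ≠ 0) {θ : ℝ}
    (hθ₀ : 0 ≤ θ) (hθπ : θ < π) :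
    θ ≤ angle x y ↔ sin θ * ⟪x, y⟫ ≤ cos θ * (sin (angle x y) * (‖x‖ * ‖y‖)) := by
  have hnorm : 0 < ‖x‖ * ‖y‖ := by positivity
  have h0 := angle_nonneg x y
  have hπ := angle_le_pi x y
  have key : sin (θ - angle x y) * (‖x‖ * ‖y‖) =
      sin θ * ⟪x, y⟫ - cos θ * (sin (angle x y) * (‖x‖ * ‖y‖)) := by
    rw [sin_sub, ← cos_angle_mul_norm_mul_norm]
    ring
  rw [← sub_nonpos (a := sin θ * _), ← key]
  constructor
  · intro h
    exact mul_nonpos_of_nonpos_of_nonneg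
      (sin_nonpos_of_nonpos_of_neg_pi_le (by linarith) (by linarith)) hnorm.le
  · intro h
    by_contra! hlt
    exact h.not_gt (mul_pos (sin_pos_of_pos_of_lt_pi (by linarith) (by linarith)) hnorm)

end InnerProductSpace

section TwoDim

variable {E : Type*} [NormedAddCommGroup E] [InnerProductSpace ℝ E] [Fact (finrank ℝ E = 2)]

namespace Orientation

variable (o : Orientation ℝ E (Fin 2))

theorem abs_areaForm_eq_sin_angle_mul_norm_mul_norm (x y : E) :
    |o.areaForm x y| = sin (angle x y) * (‖x‖ * ‖y‖) := by
  rw [sin_angle_mul_norm_mul_norm, ← sqrt_sq_eq_abs, real_inner_self_eq_norm_sq,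
    real_inner_self_eq_norm_sq, ← o.inner_sq_add_areaForm_sq]
  congr 1
  ring

theorem convexOn_abs_areaForm_sub_sub (a b : E) :
    ConvexOn ℝ univ fun p => |o.areaForm (a - p) (b - p)| := by
  refine ⟨convex_univ, fun p _ q _ t s ht hs hts => ?_⟩
  simp only [smul_eq_mul]
  rw [o.areaForm.apply_sub_combo_sub_combo a b p q hts, o.areaForm_apply_self, smul_zero,
    sub_zero]
  calc _ ≤ |t * _| + |s * _| := abs_add_le _ _
    _ = _ := by rw [abs_mul, abs_mul, abs_of_nonneg ht, abs_of_nonneg hs]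

theorem le_angle_iff_areaForm {a b p : E} (ha : p ≠ a) (hb : p ≠ b) {θ : ℝ} (hθ₀ : 0 ≤ θ)
    (hθπ : θ < π) :
    θ ≤ EuclideanGeometry.angle a p b ↔
      sin θ * ⟪a - p, b - p⟫ + -cos θ * |o.areaForm (a - p) (b - p)| ≤ 0 := by
  rw [EuclideanGeometry.angle, vsub_eq_sub, vsub_eq_sub,
    le_angle_iff_sin_mul_inner_le (sub_ne_zero.2 ha.symm) (sub_ne_zero.2 hb.symm) hθ₀ hθπ,
    o.abs_areaForm_eq_sin_angle_mul_norm_mul_norm, neg_mul, ← sub_eq_add_neg, sub_nonpos]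

end Orientation

theorem convex_setOf_le_angle (a b : E) {θ : ℝ} (hθ₁ : π / 2 ≤ θ) (hθ₂ : θ < π) :
    Convex ℝ {p | p ≠ a ∧ p ≠ b ∧ θ ≤ EuclideanGeometry.angle a p b} := by
  have : FiniteDimensional ℝ E := .of_fact_finrank_eq_two
  let o : Orientation ℝ E (Fin 2) := (finBasisOfFinrankEq ℝ E Fact.out).orientation
  set g := fun p => sin θ * ⟪a - p, b - p⟫ + -cos θ * |o.areaForm (a - p) (b - p)|
  have hθ₀ : 0 ≤ θ := by linarith [pi_pos]
  have hsin : 0 < sin θ := sin_pos_of_pos_of_lt_pi (by linarith [pi_pos]) hθ₂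
  have hcos : 0 ≤ -cos θ := neg_nonneg.2 (cos_nonpos_of_pi_div_two_le_of_le hθ₁ (by linarith))
  have hg : StrictConvexOn ℝ univ g :=
    ((strictConvexOn_inner_sub_sub a b).const_mul hsin).add_convexOn
      ((o.convexOn_abs_areaForm_sub_sub a b).smul hcos)
  convert hg.convex_le_diff (r := 0) (T := {a, b}) ?_ using 1
  · ext p
    simp only [mem_ofPred_eq, mem_sdiff, mem_insert_iff, mem_singleton_iff, mem_univ, true_and,
      not_or]
    exact ⟨fun ⟨ha, hb, h⟩ => ⟨(o.le_angle_iff_areaForm ha hb hθ₀ hθ₂).1 h, ha, hb⟩,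
      fun ⟨h, ha, hb⟩ => ⟨ha, hb, (o.le_angle_iff_areaForm ha hb hθ₀ hθ₂).2 h⟩⟩
  · rintro p (rfl | rfl) <;> simp [g]

end TwoDim

theorem obtuse_angle_region_convex_general (a b : EuclideanSpace ℝ (Fin 2))
    (θ : ℝ) (hθ₁ : Real.pi / 2 ≤ θ) (hθ₂ : θ < Real.pi) :
    Convex ℝ {p : EuclideanSpace ℝ (Fin 2) |
      p ≠ a ∧ p ≠ b ∧ θ ≤ EuclideanGeometry.angle a p b} :=
  have : Fact (finrank ℝ (EuclideanSpace ℝ (Fin 2)) = 2) := ⟨finrank_euclideanSpace_fin⟩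
  convex_setOf_le_angle a b hθ₁ hθ₂

theorem obtuse_angle_region_convex (a b : EuclideanSpace ℝ (Fin 2)) (hab : a ≠ b)
    (θ : ℝ) (hθ₁ : Real.pi / 2 ≤ θ) (hθ₂ : θ < Real.pi) :
    Convex ℝ {p : EuclideanSpace ℝ (Fin 2) |
      p ≠ a ∧ p ≠ b ∧ θ ≤ EuclideanGeometry.angle a p b} :=
  obtuse_angle_region_convex_general a b θ hθ₁ hθ₂
end

section
/- Let a and b be distinct points of the Euclidean plane ℝ² and let θ be a real number with 0 < θ < π. Writing det(u, v) = u₁v₂ − u₂v₁ for u, v ∈ ℝ², the set { p ∈ ℝ² | det(b − a, p − a) > 0 and ∠(a, p, b) ≥ θ } is convex, where ∠(a, p, b) denotes the (undirected) angle at p in the triangle a p b. -/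
/-!
On the side of the line `ab` where `det (b - a) (p - a) > 0`, the products
`‖a - p‖ ‖b - p‖ cos ∠apb` and `‖a - p‖ ‖b - p‖ sin ∠apb` are `⟪a - p, b - p⟫` and
`det (a - p) (b - p)`, so `θ ≤ ∠apb` becomes `sin θ ⟪a - p, b - p⟫ ≤ cos θ det (a - p) (b - p)`.
Completing the square turns this into `dist p c ≤ dist a b / (2 sin θ)` for a centre `c` on the
perpendicular bisector of `ab` (the inscribed angle theorem), so the region is an open half-plane
intersected with a closed disk.
-/

open Real InnerProductGeometry
open scoped RealInnerProductSpace

local notation "ℝ²" => EuclideanSpace ℝ (Fin 2)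

def det₂ (u v : ℝ²) : ℝ := u 0 * v 1 - u 1 * v 0

lemma inner_eq_fin_two (u v : ℝ²) : ⟪u, v⟫ = u 0 * v 0 + u 1 * v 1 := by
  simp [PiLp.inner_apply, Fin.sum_univ_two, mul_comm]

lemma dist_sq_eq_fin_two (u v : ℝ²) : dist u v ^ 2 = (u 0 - v 0) ^ 2 + (u 1 - v 1) ^ 2 := by
  rw [EuclideanSpace.dist_eq, sq_sqrt (by positivity), Fin.sum_univ_two, Real.dist_eq, Real.dist_eq,
    sq_abs, sq_abs]

lemma sin_angle_mul_norm_mul_norm_eq_abs_det₂ (x y : ℝ²) :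
    sin (angle x y) * (‖x‖ * ‖y‖) = |det₂ x y| := by
  rw [sin_angle_mul_norm_mul_norm, ← sqrt_sq_eq_abs]
  congr 1
  simp only [inner_eq_fin_two, det₂]
  ring

lemma le_iff_sin_sub_nonpos {θ α : ℝ} (hθ₀ : 0 ≤ θ) (hθπ : θ < π) (hα₀ : 0 ≤ α) (hαπ : α ≤ π) :
    θ ≤ α ↔ sin (θ - α) ≤ 0 := by
  refine ⟨fun h => sin_nonpos_of_nonpos_of_neg_pi_le (by linarith) (by linarith), fun h => ?_⟩
  by_contra! hlt
  linarith [sin_pos_of_pos_of_lt_pi (sub_pos.2 hlt) (by linarith : θ - α < π)]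

lemma le_angle_iff_sin_mul_inner_le_cos_mul_det₂ {x y : ℝ²} (hxy : 0 < det₂ x y) {θ : ℝ}
    (hθ₀ : 0 ≤ θ) (hθπ : θ < π) :
    θ ≤ angle x y ↔ sin θ * ⟪x, y⟫ ≤ cos θ * det₂ x y := by
  have hx : x ≠ 0 := by rintro rfl; simp [det₂] at hxy
  have hy : y ≠ 0 := by rintro rfl; simp [det₂] at hxy
  have hnorm : 0 < ‖x‖ * ‖y‖ := by positivity
  have hsin : sin (θ - angle x y) * (‖x‖ * ‖y‖) = sin θ * ⟪x, y⟫ - cos θ * det₂ x y := by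
    rw [sin_sub, sub_mul, mul_assoc, mul_assoc, cos_angle_mul_norm_mul_norm,
      sin_angle_mul_norm_mul_norm_eq_abs_det₂, abs_of_pos hxy]
  rw [le_iff_sin_sub_nonpos hθ₀ hθπ (angle_nonneg x y) (angle_le_pi x y), ← sub_nonpos (a := _ * _),
    ← hsin]
  exact (smul_nonpos_iff_nonpos_of_pos_right hnorm).symm

/-- The centre of the circle through `a` and `b` on whose arc to the left of `ab` the chord `ab`
subtends the angle `θ`; its radius is `dist a b / (2 * sin θ)`. -/
noncomputable def arcCenter (a b : ℝ²) (θ : ℝ) : ℝ² :=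
  midpoint ℝ a b + (cot θ / 2) • !₂[a 1 - b 1, b 0 - a 0]

lemma sin_mul_inner_sub_cos_mul_det₂_eq {θ : ℝ} (hθ : sin θ ≠ 0) (a b p : ℝ²) :
    sin θ * ⟪a - p, b - p⟫ - cos θ * det₂ (a - p) (b - p) =
      sin θ * (dist p (arcCenter a b θ) ^ 2 - (dist a b / (2 * sin θ)) ^ 2) := by
  simp only [dist_sq_eq_fin_two, div_pow, arcCenter, midpoint_eq_smul_add, inner_eq_fin_two, det₂,
    cot_eq_cos_div_sin, invOf_eq_inv, PiLp.add_apply, PiLp.sub_apply, PiLp.smul_apply, smul_eq_mul,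
    Matrix.cons_val_zero, Matrix.cons_val_one, Matrix.cons_val_fin_one]
  field_simp
  linear_combination (-(a 0 - b 0) ^ 2 - (a 1 - b 1) ^ 2) * sin_sq_add_cos_sq θ

lemma le_angle_iff_dist_arcCenter_le {a b p : ℝ²} (hp : 0 < det₂ (b - a) (p - a)) {θ : ℝ}
    (hθ₀ : 0 < θ) (hθπ : θ < π) :
    θ ≤ EuclideanGeometry.angle a p b ↔ dist p (arcCenter a b θ) ≤ dist a b / (2 * sin θ) := by
  have hsin : 0 < sin θ := sin_pos_of_pos_of_lt_pi hθ₀ hθπ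
  have hdet : det₂ (a - p) (b - p) = det₂ (b - a) (p - a) := by
    simp only [det₂, PiLp.sub_apply]; ring
  rw [EuclideanGeometry.angle, vsub_eq_sub, vsub_eq_sub,
    le_angle_iff_sin_mul_inner_le_cos_mul_det₂ (hdet ▸ hp) hθ₀.le hθπ, ← sub_nonpos,
    sin_mul_inner_sub_cos_mul_det₂_eq hsin.ne', ← smul_eq_mul (sin θ),
    smul_nonpos_iff_nonpos_of_pos_left hsin, sub_nonpos, sq_le_sq₀ dist_nonneg (by positivity)]

lemma convex_setOf_det₂_sub_pos (u a : ℝ²) : Convex ℝ {p : ℝ² | 0 < det₂ u (p - a)} := by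
  have hlin : IsLinearMap ℝ (det₂ u) :=
    ⟨fun v w => by simp only [det₂, PiLp.add_apply]; ring,
      fun c v => by simp only [det₂, PiLp.smul_apply, smul_eq_mul]; ring⟩
  simpa only [hlin.map_sub, sub_pos] using convex_halfSpace_gt hlin (det₂ u a)

theorem angle_halfplane_region_convex_general (a b : EuclideanSpace ℝ (Fin 2))
    (θ : ℝ) (hθ₁ : 0 < θ) (hθ₂ : θ < Real.pi) :
    Convex ℝ {p : EuclideanSpace ℝ (Fin 2) |
      0 < (b - a) 0 * (p - a) 1 - (b - a) 1 * (p - a) 0 ∧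
      θ ≤ EuclideanGeometry.angle a p b} := by
  have hregion : {p : ℝ² | 0 < det₂ (b - a) (p - a) ∧ θ ≤ EuclideanGeometry.angle a p b} =
      {p | 0 < det₂ (b - a) (p - a)} ∩
        Metric.closedBall (arcCenter a b θ) (dist a b / (2 * sin θ)) :=
    Set.ext fun p => and_congr_right fun hp => le_angle_iff_dist_arcCenter_le hp hθ₁ hθ₂
  exact hregion ▸ (convex_setOf_det₂_sub_pos _ _).inter (convex_closedBall _ _)

theorem angle_halfplane_region_convex (a b : EuclideanSpace ℝ (Fin 2)) (hab : a ≠ b)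
    (θ : ℝ) (hθ₁ : 0 < θ) (hθ₂ : θ < Real.pi) :
    Convex ℝ {p : EuclideanSpace ℝ (Fin 2) |
      0 < (b - a) 0 * (p - a) 1 - (b - a) 1 * (p - a) 0 ∧
      θ ≤ EuclideanGeometry.angle a p b} :=
  angle_halfplane_region_convex_general a b θ hθ₁ hθ₂
end

section
/- Let a and b be distinct points of ℝ² and let q > 0. Writing det(u, v) = u₁v₂ − u₂v₁, consider the set D = { p ∈ ℝ² | q·(‖b − a‖² + ‖p − b‖² + ‖p − a‖²) ≤ det(b − a, p − a)/2 }. Then either D is empty, or there exist a point c ∈ ℝ² with dist(c, a) = dist(c, b) and a radius ρ ≥ 0 such that D is the closed disk of radius ρ centered at c. In particular D is convex. -/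
/-!
Completing the square: the quality condition reads `2q‖p - c‖² ≤ 2q ρ²` for an explicit centre `c`,
obtained from the midpoint of `ab` by moving a distance `‖b - a‖ / (8q)` perpendicularly to `ab`,
towards the side where `det(b - a, p - a) > 0`, and `ρ² = ‖b - a‖² (1 / (64 q²) - 3 / 4)`. So `D` is
a closed disk when `ρ² ≥ 0` (for `a ≠ b`: when `q ≤ 1 / (4√3)`, the quality of the equilateral
triangle) and empty otherwise.
-/

open Metric

lemma setOf_sq_norm_sub_le_eq_empty_or_closedBall {E : Type*} [SeminormedAddCommGroup E]
    (c : E) (r : ℝ) :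
    {p | ‖p - c‖ ^ 2 ≤ r} = ∅ ∨ {p | ‖p - c‖ ^ 2 ≤ r} = closedBall c √r := by
  rcases lt_or_ge r 0 with hr | hr
  · left
    ext p
    simp only [Set.mem_ofPred_eq, Set.mem_empty_iff_false, iff_false, not_le]
    exact hr.trans_le (by positivity)
  · right
    ext p
    rw [Set.mem_ofPred_eq, mem_closedBall_iff_norm, Real.le_sqrt (norm_nonneg _) hr]

lemma EuclideanSpace.sq_norm_fin_two (x : EuclideanSpace ℝ (Fin 2)) :
    ‖x‖ ^ 2 = x 0 ^ 2 + x 1 ^ 2 := by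
  rw [EuclideanSpace.real_norm_sq_eq, Fin.sum_univ_two]

noncomputable def bankSmithCenter (a b : EuclideanSpace ℝ (Fin 2)) (q : ℝ) :
    EuclideanSpace ℝ (Fin 2) :=
  !₂[(a 0 + b 0) / 2 - (b 1 - a 1) / (8 * q), (a 1 + b 1) / 2 + (b 0 - a 0) / (8 * q)]

section BankSmith

open EuclideanSpace

variable (a b : EuclideanSpace ℝ (Fin 2)) (q : ℝ)

lemma dist_bankSmithCenter_left_eq_right :
    dist (bankSmithCenter a b q) a = dist (bankSmithCenter a b q) b := by
  rw [← sq_eq_sq₀ dist_nonneg dist_nonneg, dist_eq_norm, dist_eq_norm, sq_norm_fin_two,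
    sq_norm_fin_two]
  simp only [bankSmithCenter, PiLp.sub_apply, Matrix.cons_val_zero, Matrix.cons_val_one]
  ring

variable {q}

lemma bankSmith_quality_le_iff (hq : 0 < q) (p : EuclideanSpace ℝ (Fin 2)) :
    q * (‖b - a‖ ^ 2 + ‖p - b‖ ^ 2 + ‖p - a‖ ^ 2) ≤
        ((b - a) 0 * (p - a) 1 - (b - a) 1 * (p - a) 0) / 2 ↔
      ‖p - bankSmithCenter a b q‖ ^ 2 ≤ ‖b - a‖ ^ 2 * (1 / (64 * q ^ 2) - 3 / 4) := by
  have completed_square :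
      q * (‖b - a‖ ^ 2 + ‖p - b‖ ^ 2 + ‖p - a‖ ^ 2) -
          ((b - a) 0 * (p - a) 1 - (b - a) 1 * (p - a) 0) / 2 =
        2 * q * (‖p - bankSmithCenter a b q‖ ^ 2 - ‖b - a‖ ^ 2 * (1 / (64 * q ^ 2) - 3 / 4)) := by
    simp only [sq_norm_fin_two, PiLp.sub_apply, bankSmithCenter, Matrix.cons_val_zero,
      Matrix.cons_val_one]
    field_simp
    ring
  rw [← sub_nonpos, completed_square, ← mul_zero (2 * q),
    mul_le_mul_iff_of_pos_left (by positivity), sub_nonpos]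

end BankSmith

theorem bank_smith_region_general (a b : EuclideanSpace ℝ (Fin 2))
    (q : ℝ) (hq : 0 < q) (D : Set (EuclideanSpace ℝ (Fin 2)))
    (hD : D = {p : EuclideanSpace ℝ (Fin 2) |
      q * (‖b - a‖ ^ 2 + ‖p - b‖ ^ 2 + ‖p - a‖ ^ 2) ≤
        ((b - a) 0 * (p - a) 1 - (b - a) 1 * (p - a) 0) / 2}) :
    (D = ∅ ∨ ∃ (c : EuclideanSpace ℝ (Fin 2)) (ρ : ℝ),
      dist c a = dist c b ∧ 0 ≤ ρ ∧ D = Metric.closedBall c ρ) ∧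
    Convex ℝ D := by
  have hD_disk : D = {p | ‖p - bankSmithCenter a b q‖ ^ 2 ≤
      ‖b - a‖ ^ 2 * (1 / (64 * q ^ 2) - 3 / 4)} := by
    rw [hD]
    ext p
    exact bankSmith_quality_le_iff a b hq p
  rcases setOf_sq_norm_sub_le_eq_empty_or_closedBall (bankSmithCenter a b q)
      (‖b - a‖ ^ 2 * (1 / (64 * q ^ 2) - 3 / 4)) with h | h <;> rw [hD_disk, h]
  · exact ⟨Or.inl rfl, convex_empty⟩
  · exact ⟨Or.inr ⟨_, _, dist_bankSmithCenter_left_eq_right a b q, Real.sqrt_nonneg _, rfl⟩,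
      convex_closedBall _ _⟩

theorem bank_smith_region (a b : EuclideanSpace ℝ (Fin 2)) (hab : a ≠ b)
    (q : ℝ) (hq : 0 < q) (D : Set (EuclideanSpace ℝ (Fin 2)))
    (hD : D = {p : EuclideanSpace ℝ (Fin 2) |
      q * (‖b - a‖ ^ 2 + ‖p - b‖ ^ 2 + ‖p - a‖ ^ 2) ≤
        ((b - a) 0 * (p - a) 1 - (b - a) 1 * (p - a) 0) / 2}) :
    (D = ∅ ∨ ∃ (c : EuclideanSpace ℝ (Fin 2)) (ρ : ℝ),
      dist c a = dist c b ∧ 0 ≤ ρ ∧ D = Metric.closedBall c ρ) ∧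
    Convex ℝ D :=
  bank_smith_region_general a b q hq D hD
end

section
/- Let r be a real number with 0 < r < 1/2. Then the function f(y) = √( (r + y)² · ( y·(1 − 4r²) − 8r³ ) / y ) is concave on the interval [ 8r³/(1 − 4r²), ∞ ). -/
/-! On its domain `y ≥ 8r³/(1 - 4r²) > 0`, with `c = 1 - 4r²` and `b = 8r³`, the function splits as
`√(y (c y - b)) + r √(c - b / y)`. The first summand is the geometric mean of two nonnegative affine
functions of `y`, the second is the square root of the nonnegative concave function `c - b / y`, and
geometric means and square roots of nonnegative concave functions are concave. -/

open Set

/-- Cauchy–Schwarz in the plane, for the vectors `(√p₁, √p₂)` and `(√q₁, √q₂)`. -/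
lemma Real.sqrt_mul_add_sqrt_mul_le {p₁ q₁ p₂ q₂ : ℝ} (hp₁ : 0 ≤ p₁) (hq₁ : 0 ≤ q₁) (hp₂ : 0 ≤ p₂)
    (hq₂ : 0 ≤ q₂) : √(p₁ * q₁) + √(p₂ * q₂) ≤ √((p₁ + p₂) * (q₁ + q₂)) := by
  apply Real.le_sqrt_of_sq_le
  have hcross : 2 * √(p₁ * q₁) * √(p₂ * q₂) ≤ p₁ * q₂ + p₂ * q₁ := by
    have hsq : √(p₁ * q₁) * √(p₂ * q₂) = √(p₁ * q₂) * √(p₂ * q₁) := by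
      rw [← Real.sqrt_mul (by positivity), ← Real.sqrt_mul (by positivity)]
      ring_nf
    rw [mul_assoc, hsq]
    nlinarith [sq_nonneg (√(p₁ * q₂) - √(p₂ * q₁)), Real.sq_sqrt (mul_nonneg hp₁ hq₂),
      Real.sq_sqrt (mul_nonneg hp₂ hq₁)]
  nlinarith [Real.sq_sqrt (mul_nonneg hp₁ hq₁), Real.sq_sqrt (mul_nonneg hp₂ hq₂)]

section

variable {E : Type*} [AddCommGroup E] [Module ℝ E] {s : Set E} {f g : E → ℝ}

lemma ConcaveOn.sqrt_mul (hf : ConcaveOn ℝ s f) (hg : ConcaveOn ℝ s g) (hf₀ : ∀ x ∈ s, 0 ≤ f x)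
    (hg₀ : ∀ x ∈ s, 0 ≤ g x) : ConcaveOn ℝ s fun x => √(f x * g x) := by
  refine ⟨hf.1, fun x hx y hy a b ha hb hab => ?_⟩
  have hmean := Real.sqrt_mul_add_sqrt_mul_le (mul_nonneg ha (hf₀ x hx)) (mul_nonneg ha (hg₀ x hx))
    (mul_nonneg hb (hf₀ y hy)) (mul_nonneg hb (hg₀ y hy))
  calc a • √(f x * g x) + b • √(f y * g y)
      = √(a * f x * (a * g x)) + √(b * f y * (b * g y)) := by
        rw [show a * f x * (a * g x) = a ^ 2 * (f x * g x) by ring,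
          show b * f y * (b * g y) = b ^ 2 * (f y * g y) by ring, Real.sqrt_mul (sq_nonneg a),
          Real.sqrt_mul (sq_nonneg b), Real.sqrt_sq ha, Real.sqrt_sq hb, smul_eq_mul, smul_eq_mul]
    _ ≤ √((a * f x + b * f y) * (a * g x + b * g y)) := hmean
    _ ≤ √(f (a • x + b • y) * g (a • x + b • y)) := by
        apply Real.sqrt_le_sqrt
        have hfx := hf.2 hx hy ha hb hab
        have hgx := hg.2 hx hy ha hb hab
        simp only [smul_eq_mul] at hfx hgx
        exact mul_le_mul hfx hgx (add_nonneg (mul_nonneg ha (hg₀ x hx)) (mul_nonneg hb (hg₀ y hy)))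
          (hf₀ _ (hf.1 hx hy ha hb hab))

lemma ConcaveOn.sqrt (hf : ConcaveOn ℝ s f) (hf₀ : ∀ x ∈ s, 0 ≤ f x) :
    ConcaveOn ℝ s fun x => √(f x) := by
  simpa using hf.sqrt_mul (concaveOn_const 1 hf.1) hf₀ fun _ _ => zero_le_one

end

lemma concaveOn_const_sub_div {b : ℝ} (c : ℝ) (hb : 0 ≤ b) :
    ConcaveOn ℝ (Ioi 0) fun y : ℝ => c - b / y := by
  have h := (concaveOn_const c (convex_Ioi 0)).sub ((convexOn_zpow (-1)).smul hb)
  refine h.congr fun y _ => ?_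
  simp [div_eq_mul_inv]

lemma Real.sqrt_sq_mul_sub_div_eq {r y b c : ℝ} (hy : 0 < y) (hry : 0 ≤ r + y) :
    √((r + y) ^ 2 * (y * c - b) / y) = √(y * (y * c - b)) + r * √(c - b / y) := by
  have hquot : (y * c - b) / y = c - b / y := by field_simp
  have hprod : y * (y * c - b) = y ^ 2 * (c - b / y) := by field_simp
  rw [mul_div_assoc, Real.sqrt_mul (sq_nonneg _), Real.sqrt_sq hry, hquot, hprod,
    Real.sqrt_mul (sq_nonneg _), Real.sqrt_sq hy.le]
  ring

theorem inradius_boundary_concave (r : ℝ) (hr₀ : 0 < r) (hr₁ : r < 1 / 2) :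
    ConcaveOn ℝ (Set.Ici (8 * r ^ 3 / (1 - 4 * r ^ 2)))
      (fun y : ℝ => Real.sqrt ((r + y) ^ 2 * (y * (1 - 4 * r ^ 2) - 8 * r ^ 3) / y)) := by
  have hc : 0 < 1 - 4 * r ^ 2 := by nlinarith
  set c := 1 - 4 * r ^ 2
  set b := 8 * r ^ 3
  have hb : 0 < b := by positivity
  have hpos : Ici (b / c) ⊆ Ioi 0 := Ici_subset_Ioi.2 (by positivity)
  have hlin : ∀ y ∈ Ici (b / c), 0 ≤ y * c - b := fun y hy => by
    linarith [(div_le_iff₀ hc).1 hy]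
  have hconv : Convex ℝ (Ici (b / c)) := convex_Ici _
  have hfirst : ConcaveOn ℝ (Ici (b / c)) fun y => √(y * (y * c - b)) :=
    (concaveOn_id hconv).sqrt_mul
      (((concaveOn_id hconv).smul hc.le).sub (convexOn_const b hconv) |>.congr fun y _ => by
        simp [mul_comm])
      (fun y hy => (hpos hy).le) hlin
  have hsecond : ConcaveOn ℝ (Ici (b / c)) fun y => √(c - b / y) :=
    ((concaveOn_const_sub_div c hb.le).subset hpos hconv).sqrt fun y hy => by
      rw [sub_nonneg, div_le_iff₀ (hpos hy)]
      linarith [hlin y hy]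
  refine (hfirst.add (hsecond.smul hr₀.le)).congr fun y hy => ?_
  exact (Real.sqrt_sq_mul_sub_div_eq (hpos hy) (by linarith [(hpos hy).out])).symm
end

section
/- Let d be an integer with d ≥ 2. Then the function g(x,y) = (x² + y²)^{d/(2(d−1))} · y^{−1/(d−1)} is convex on the open upper half-plane { (x,y) ∈ ℝ² | y > 0 }. -/
/-!
With `α = d / (2(d-1))` one has `g(x, y) = y · φ(x / y)` for `φ(t) = (t² + 1) ^ α = |t + i| ^ (2α)`.
Since `2α ≥ 1`, `φ` is convex, and `g` is its perspective function, which is convex on `y > 0`: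
at a convex combination of two points, `x / y` is a convex combination of the two slopes with
weights proportional to `a y₁` and `b y₂`.
-/

open Real Set

section Perspective

variable {E : Type*} [AddCommGroup E] [Module ℝ E]

theorem inv_smul_combo_eq_weighted_combo {x₁ x₂ : E} {y₁ y₂ a b : ℝ} (hy₁ : 0 < y₁)
    (hy₂ : 0 < y₂) (hy : 0 < a * y₁ + b * y₂) :
    (a * y₁ + b * y₂)⁻¹ • (a • x₁ + b • x₂) =
      (a * y₁ / (a * y₁ + b * y₂)) • (y₁⁻¹ • x₁) + (b * y₂ / (a * y₁ + b * y₂)) • (y₂⁻¹ • x₂) := by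
  simp only [smul_smul, smul_add]
  congr 2 <;> field_simp

theorem ConvexOn.perspective {s : Set E} {φ : E → ℝ} (hφ : ConvexOn ℝ s φ) :
    ConvexOn ℝ {p : E × ℝ | 0 < p.2 ∧ p.2⁻¹ • p.1 ∈ s} fun p => p.2 * φ (p.2⁻¹ • p.1) := by
  have hweights : ∀ ⦃y₁ y₂ a b : ℝ⦄, 0 < y₁ → 0 < y₂ → 0 ≤ a → 0 ≤ b → a + b = 1 →
      0 < a * y₁ + b * y₂ ∧ 0 ≤ a * y₁ / (a * y₁ + b * y₂) ∧ 0 ≤ b * y₂ / (a * y₁ + b * y₂) ∧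
        a * y₁ / (a * y₁ + b * y₂) + b * y₂ / (a * y₁ + b * y₂) = 1 := by
    intro y₁ y₂ a b hy₁ hy₂ ha hb hab
    have hy : 0 < a * y₁ + b * y₂ := convex_Ioi (0 : ℝ) hy₁ hy₂ ha hb hab
    exact ⟨hy, by positivity, by positivity, by rw [← add_div, div_self hy.ne']⟩
  constructor
  all_goals
    rintro ⟨x₁, y₁⟩ ⟨hy₁ : 0 < y₁, hs₁ : y₁⁻¹ • x₁ ∈ s⟩ ⟨x₂, y₂⟩ ⟨hy₂ : 0 < y₂, hs₂ : y₂⁻¹ • x₂ ∈ s⟩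
      a b ha hb hab
    obtain ⟨hy, hw₁, hw₂, hw⟩ := hweights hy₁ hy₂ ha hb hab
    simp only [Prod.smul_mk, Prod.mk_add_mk, smul_eq_mul, mem_ofPred_eq,
      inv_smul_combo_eq_weighted_combo hy₁ hy₂ hy]
  · exact ⟨hy, hφ.1 hs₁ hs₂ hw₁ hw₂ hw⟩
  · exact (mul_le_mul_of_nonneg_left (hφ.2 hs₁ hs₂ hw₁ hw₂ hw) hy.le).trans_eq
      (by simp only [smul_eq_mul]; field_simp)

end Perspective

theorem convexOn_univ_norm_rpow {E : Type*} [SeminormedAddCommGroup E] [NormedSpace ℝ E]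
    {p : ℝ} (hp : 1 ≤ p) : ConvexOn ℝ univ fun x : E => ‖x‖ ^ p := by
  refine ⟨convex_univ, fun x _ y _ a b ha hb hab => ?_⟩
  calc ‖a • x + b • y‖ ^ p ≤ (a * ‖x‖ + b * ‖y‖) ^ p :=
        rpow_le_rpow (norm_nonneg _) (convexOn_univ_norm.2 trivial trivial ha hb hab)
          (by linarith)
    _ ≤ a * ‖x‖ ^ p + b * ‖y‖ ^ p :=
        (convexOn_rpow hp).2 (norm_nonneg x) (norm_nonneg y) ha hb hab

theorem convexOn_univ_sq_add_one_rpow {α : ℝ} (hα : 1 ≤ 2 * α) :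
    ConvexOn ℝ univ fun t : ℝ => (t ^ 2 + 1) ^ α := by
  let addI : ℝ →ᵃ[ℝ] ℂ :=
    Complex.ofRealCLM.toLinearMap.toAffineMap + AffineMap.const ℝ ℝ Complex.I
  refine ((convexOn_univ_norm_rpow hα).comp_affineMap addI).congr fun t _ => ?_
  have hnorm : ‖(t : ℂ) + Complex.I‖ = √(t ^ 2 + 1) := by
    simpa using Complex.norm_add_mul_I t 1
  simp [addI, hnorm, sqrt_eq_rpow, ← rpow_mul (by positivity : (0 : ℝ) ≤ t ^ 2 + 1)]

theorem sq_add_sq_rpow_mul_rpow_eq {x y α : ℝ} (hy : 0 < y) :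
    (x ^ 2 + y ^ 2) ^ α * y ^ (1 - 2 * α) = y * ((y⁻¹ * x) ^ 2 + 1) ^ α := by
  have hhom : x ^ 2 + y ^ 2 = y ^ 2 * ((y⁻¹ * x) ^ 2 + 1) := by field_simp
  rw [hhom, mul_rpow (by positivity) (by positivity), rpow_sub hy, rpow_one, ← rpow_natCast,
    ← rpow_mul hy.le]
  push_cast
  field_simp

theorem convexOn_sq_add_sq_rpow_mul_rpow {α : ℝ} (hα : 1 ≤ 2 * α) :
    ConvexOn ℝ {p : ℝ × ℝ | 0 < p.2} fun p => (p.1 ^ 2 + p.2 ^ 2) ^ α * p.2 ^ (1 - 2 * α) := by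
  have h := (convexOn_univ_sq_add_one_rpow hα).perspective
  simp only [mem_univ, and_true, smul_eq_mul] at h
  exact h.congr fun p hp => (sq_add_sq_rpow_mul_rpow_eq hp).symm

theorem solid_angle_density_sconcave_2d (d : ℕ) (hd : 2 ≤ d) :
    ConvexOn ℝ {p : ℝ × ℝ | 0 < p.2}
      (fun p : ℝ × ℝ =>
        (p.1 ^ 2 + p.2 ^ 2) ^ ((d : ℝ) / (2 * ((d : ℝ) - 1))) *
          p.2 ^ (-1 / ((d : ℝ) - 1))) := by
  have hd₁ : (0 : ℝ) < d - 1 := by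
    have : (2 : ℝ) ≤ d := by exact_mod_cast hd
    linarith
  have hexp : -1 / ((d : ℝ) - 1) = 1 - 2 * ((d : ℝ) / (2 * ((d : ℝ) - 1))) := by
    field_simp
    ring
  have hα : 1 ≤ 2 * ((d : ℝ) / (2 * ((d : ℝ) - 1))) := by
    rw [← mul_div_assoc, mul_div_mul_left _ _ two_ne_zero, one_le_div hd₁]
    linarith
  simpa only [hexp] using convexOn_sq_add_sq_rpow_mul_rpow hα
end

section
/- Let d be an integer with d ≥ 2 and let e ∈ ℝ^d be a unit vector. Then the function F(v) = ( ⟨v, e⟩ / ‖v‖^d )^{−1/(d−1)} is convex on the open half-space { v ∈ ℝ^d | ⟨v, e⟩ > 0 }. -/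
open scoped RealInnerProductSpace

/-!
With `t = ⟪v, e⟫` and `r = ‖v‖`, the function equals `t (r / t) ^ (d / (d - 1))`, the perspective
of the convex power `r ↦ r ^ (d / (d - 1))` (note `d / (d - 1) ≥ 1`). Perspectives of convex
functions are jointly convex, and this one is increasing in `r`; since `t` is linear in `v` and
`r` is convex in `v`, the composition is convex on `t > 0`.
-/

open Set

theorem ConvexOn.perspective_s15 {E : Type*} [AddCommGroup E] [Module ℝ E] {s : Set E} {f : E → ℝ}
    (hf : ConvexOn ℝ s f) :
    ConvexOn ℝ {q : ℝ × E | 0 < q.1 ∧ q.1⁻¹ • q.2 ∈ s} (fun q => q.1 * f (q.1⁻¹ • q.2)) := by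
  have key : ∀ ⦃q₁ q₂ : ℝ × E⦄, 0 < q₁.1 → q₁.1⁻¹ • q₁.2 ∈ s → 0 < q₂.1 → q₂.1⁻¹ • q₂.2 ∈ s →
      ∀ ⦃a b : ℝ⦄, 0 ≤ a → 0 ≤ b → a + b = 1 →
      0 < (a • q₁ + b • q₂).1 ∧
      (a • q₁ + b • q₂).1⁻¹ • (a • q₁ + b • q₂).2 ∈ s ∧
      (a • q₁ + b • q₂).1 * f ((a • q₁ + b • q₂).1⁻¹ • (a • q₁ + b • q₂).2) ≤
        a • (q₁.1 * f (q₁.1⁻¹ • q₁.2)) + b • (q₂.1 * f (q₂.1⁻¹ • q₂.2)) := by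
    rintro ⟨t₁, x₁⟩ ⟨t₂, x₂⟩ ht₁ hx₁ ht₂ hx₂ a b ha hb hab
    simp only [Prod.fst_add, Prod.snd_add, Prod.smul_fst, Prod.smul_snd, smul_eq_mul] at *
    set t := a * t₁ + b * t₂
    have ht : 0 < t := by nlinarith [min_le_left t₁ t₂, min_le_right t₁ t₂, lt_min ht₁ ht₂]
    -- `(a x₁ + b x₂) / t` is the convex combination of `x₁ / t₁` and `x₂ / t₂` with weights `a tᵢ / t`.
    have hw₁ : 0 ≤ a * t₁ / t := by positivity
    have hw₂ : 0 ≤ b * t₂ / t := by positivity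
    have hw : a * t₁ / t + b * t₂ / t = 1 := by rw [← add_div, div_self ht.ne']
    have hcomb : t⁻¹ • (a • x₁ + b • x₂) =
        (a * t₁ / t) • (t₁⁻¹ • x₁) + (b * t₂ / t) • (t₂⁻¹ • x₂) := by
      simp only [smul_add, smul_smul]
      congr 2 <;> field_simp
    refine ⟨ht, hcomb ▸ hf.1 hx₁ hx₂ hw₁ hw₂ hw, ?_⟩
    calc t * f (t⁻¹ • (a • x₁ + b • x₂))
        ≤ t * ((a * t₁ / t) * f (t₁⁻¹ • x₁) + (b * t₂ / t) * f (t₂⁻¹ • x₂)) := by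
          rw [hcomb]
          exact mul_le_mul_of_nonneg_left (hf.2 hx₁ hx₂ hw₁ hw₂ hw) ht.le
      _ = a * (t₁ * f (t₁⁻¹ • x₁)) + b * (t₂ * f (t₂⁻¹ • x₂)) := by
          field_simp
  refine ⟨fun q₁ hq₁ q₂ hq₂ a b ha hb hab => ?_, fun q₁ hq₁ q₂ hq₂ a b ha hb hab => ?_⟩
  · obtain ⟨ht, hx, -⟩ := key hq₁.1 hq₁.2 hq₂.1 hq₂.2 ha hb hab
    exact ⟨ht, hx⟩
  · exact (key hq₁.1 hq₁.2 hq₂.1 hq₂.2 ha hb hab).2.2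

theorem ConvexOn.linearMap_mul_rpow_div {E : Type*} [AddCommGroup E] [Module ℝ E]
    (ℓ : E →ₗ[ℝ] ℝ) {g : E → ℝ} (hg : ConvexOn ℝ univ g) (hg₀ : ∀ v, 0 ≤ g v)
    {p : ℝ} (hp : 1 ≤ p) :
    ConvexOn ℝ {v | 0 < ℓ v} (fun v => ℓ v * (g v / ℓ v) ^ p) := by
  have hpersp := (convexOn_rpow hp).perspective_s15
  have mem : ∀ v, 0 < ℓ v → (ℓ v, g v) ∈ {q : ℝ × ℝ | 0 < q.1 ∧ q.1⁻¹ • q.2 ∈ Ici 0} :=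
    fun v hv => ⟨hv, mem_Ici.2 (smul_nonneg (inv_nonneg.2 hv.le) (hg₀ v))⟩
  refine ⟨convex_halfSpace_gt ℓ.isLinear 0, fun v hv w hw a b ha hb hab => ?_⟩
  have hvw : 0 < ℓ (a • v + b • w) := by
    rw [map_add, map_smul, map_smul]
    exact (convex_Ioi 0) hv hw ha hb hab
  calc ℓ (a • v + b • w) * (g (a • v + b • w) / ℓ (a • v + b • w)) ^ p
      ≤ ℓ (a • v + b • w) * ((a * g v + b * g w) / ℓ (a • v + b • w)) ^ p := by
        gcongr
        · exact div_nonneg (hg₀ _) hvw.le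
        · exact hg.2 trivial trivial ha hb hab
    _ ≤ a • (ℓ v * ((ℓ v)⁻¹ • g v) ^ p) + b • (ℓ w * ((ℓ w)⁻¹ • g w) ^ p) := by
        simpa [div_eq_inv_mul] using hpersp.2 (mem v hv) (mem w hw) ha hb hab
    _ = a * (ℓ v * (g v / ℓ v) ^ p) + b * (ℓ w * (g w / ℓ w) ^ p) := by
        simp only [smul_eq_mul, div_eq_inv_mul]

theorem Real.div_rpow_neg_one_div_sub_one {t r : ℝ} (ht : 0 < t) (hr : 0 < r) {s : ℝ}
    (hs : s ≠ 1) :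
    (t / r ^ s) ^ (-1 / (s - 1)) = t * (r / t) ^ (s / (s - 1)) := by
  have hs' : s - 1 ≠ 0 := sub_ne_zero.2 hs
  rw [div_rpow ht.le (by positivity), div_rpow hr.le ht.le, ← rpow_mul hr.le,
    show t * (r ^ (s / (s - 1)) / t ^ (s / (s - 1))) = t ^ (1 - s / (s - 1)) * r ^ (s / (s - 1)) by
      rw [rpow_sub ht, rpow_one]; ring, div_eq_mul_inv, ← rpow_neg hr.le]
  congr 2
  · field_simp
    ring
  · field_simp

theorem solid_angle_density_sconcave_general (d : ℕ) (hd : 2 ≤ d)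
    (e : EuclideanSpace ℝ (Fin d)) :
    ConvexOn ℝ {v : EuclideanSpace ℝ (Fin d) | 0 < ⟪v, e⟫}
      (fun v : EuclideanSpace ℝ (Fin d) =>
        (⟪v, e⟫ / ‖v‖ ^ d) ^ (-1 / ((d : ℝ) - 1))) := by
  have hd₁ : (1 : ℝ) < d := by exact_mod_cast hd
  have hp : 1 ≤ (d : ℝ) / ((d : ℝ) - 1) := by rw [le_div_iff₀ (by linarith)]; linarith
  refine (ConvexOn.linearMap_mul_rpow_div ((innerₗ _).flip e) convexOn_univ_norm norm_nonneg
    hp).congr fun v (hv : 0 < ⟪v, e⟫) => ?_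
  have hv₀ : 0 < ‖v‖ := norm_pos_iff.2 (by rintro rfl; simp at hv)
  rw [← Real.rpow_natCast, Real.div_rpow_neg_one_div_sub_one hv hv₀ hd₁.ne']
  rfl

theorem solid_angle_density_sconcave (d : ℕ) (hd : 2 ≤ d)
    (e : EuclideanSpace ℝ (Fin d)) (he : ‖e‖ = 1) :
    ConvexOn ℝ {v : EuclideanSpace ℝ (Fin d) | 0 < ⟪v, e⟫}
      (fun v : EuclideanSpace ℝ (Fin d) =>
        (⟪v, e⟫ / ‖v‖ ^ d) ^ (-1 / ((d : ℝ) - 1))) :=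
  solid_angle_density_sconcave_general d hd e
end

section
/- For a finite set S of points in ℝ², let r(S) = inf { ρ ≥ 0 | there exists c ∈ ℝ² with dist(c, x) ≤ ρ for all x ∈ S } be the radius of the minimum enclosing circle of S. Then for any four points p₁, p₂, p₃, p₄ ∈ ℝ², r({p₁, p₂, p₃, p₄}) equals the maximum over i ∈ {1,2,3,4} of r of the three-element subset obtained by omitting pᵢ, i.e. r({p₁,p₂,p₃,p₄}) = max( r({p₂,p₃,p₄}), r({p₁,p₃,p₄}), r({p₁,p₂,p₄}), r({p₁,p₂,p₃}) ). -/
/-!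
Let `M` be the largest of the four triple radii and `ε > 0`. The closed disks of radius `M + ε`
centred at the four points are convex, and any three of them meet, at the centre of a disk of
radius `M + ε` enclosing the three corresponding points. By Helly's theorem in the plane all four
disks meet, and a common point is the centre of a disk of radius `M + ε` enclosing all four points.
The reverse inequality is monotonicity of the radius.
-/

open Metric Finset Module

/-- The radius of the minimum enclosing circle of a set of points in the plane:
the infimum of radii `ρ ≥ 0` of closed disks containing all points of `S`. -/
noncomputable def minEnclosingRadius (S : Set (EuclideanSpace ℝ (Fin 2))) : ℝ :=
  sInf {ρ : ℝ | 0 ≤ ρ ∧ ∃ c : EuclideanSpace ℝ (Fin 2), ∀ x ∈ S, dist c x ≤ ρ}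

theorem exists_forall_dist_le_of_forall_card_le {E : Type*} [NormedAddCommGroup E]
    [NormedSpace ℝ E] [FiniteDimensional ℝ E] {S : Finset E} {ρ : ℝ}
    (h : ∀ T ⊆ S, #T ≤ finrank ℝ E + 1 → ∃ c, ∀ x ∈ T, dist c x ≤ ρ) :
    ∃ c, ∀ x ∈ S, dist c x ≤ ρ := by
  obtain ⟨c, hc⟩ := Convex.helly_theorem' (𝕜 := ℝ) (F := fun x ↦ closedBall x ρ)
    (fun x _ ↦ convex_closedBall x ρ) fun T hT hcard ↦ by
      obtain ⟨c, hc⟩ := h T hT hcard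
      exact ⟨c, Set.mem_iInter₂.2 hc⟩
  exact ⟨c, fun x hx ↦ mem_closedBall.1 (Set.mem_iInter₂.1 hc x hx)⟩

theorem Finset.subset_triple_of_subset_quadruple {α : Type*} [DecidableEq α] {T : Finset α}
    {a b c d : α} (hT : T ⊆ {a, b, c, d}) (hcard : #T ≤ 3) :
    T ⊆ {b, c, d} ∨ T ⊆ {a, c, d} ∨ T ⊆ {a, b, d} ∨ T ⊆ {a, b, c} := by
  by_contra! h
  have hall : ({a, b, c, d} : Finset α) ⊆ T ∧ #({a, b, c, d} : Finset α) = 4 := by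
    simp only [mem_insert, mem_singleton, subset_iff] at h hT
    refine ⟨?_, ?_⟩
    · simp only [insert_subset_iff, singleton_subset_iff]; grind
    · rw [card_insert_of_notMem, card_insert_of_notMem, card_pair] <;> grind
  have := card_le_card hall.1
  omega

section minEnclosingRadius

variable {S T : Set (EuclideanSpace ℝ (Fin 2))} {ρ : ℝ}

theorem minEnclosingRadius_nonneg (S : Set (EuclideanSpace ℝ (Fin 2))) :
    0 ≤ minEnclosingRadius S :=
  Real.sInf_nonneg fun _ hρ ↦ hρ.1

theorem minEnclosingRadius_le_of_forall_dist_le (hρ : 0 ≤ ρ) {c : EuclideanSpace ℝ (Fin 2)}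
    (hc : ∀ x ∈ S, dist c x ≤ ρ) : minEnclosingRadius S ≤ ρ :=
  csInf_le ⟨0, fun _ hρ ↦ hρ.1⟩ ⟨hρ, c, hc⟩

theorem exists_forall_dist_le_of_minEnclosingRadius_lt (hS : Bornology.IsBounded S)
    (hρ : minEnclosingRadius S < ρ) : ∃ c, ∀ x ∈ S, dist c x ≤ ρ := by
  obtain ⟨r, hr₀, hr⟩ := hS.subset_closedBall_lt 0 0
  have hne : Set.Nonempty
      {ρ : ℝ | 0 ≤ ρ ∧ ∃ c : EuclideanSpace ℝ (Fin 2), ∀ x ∈ S, dist c x ≤ ρ} :=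
    ⟨r, hr₀.le, 0, fun x hx ↦ (dist_comm 0 x).trans_le (hr hx)⟩
  obtain ⟨σ, ⟨-, c, hc⟩, hσ⟩ := exists_lt_of_csInf_lt hne hρ
  exact ⟨c, fun x hx ↦ (hc x hx).trans hσ.le⟩

theorem minEnclosingRadius_mono (hST : S ⊆ T) (hT : Bornology.IsBounded T) :
    minEnclosingRadius S ≤ minEnclosingRadius T := by
  refine le_of_forall_pos_le_add fun ε hε ↦ ?_
  obtain ⟨c, hc⟩ := exists_forall_dist_le_of_minEnclosingRadius_lt hT
    (lt_add_of_pos_right (minEnclosingRadius T) hε)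
  exact minEnclosingRadius_le_of_forall_dist_le (by linarith [minEnclosingRadius_nonneg T])
    fun x hx ↦ hc x (hST hx)

theorem minEnclosingRadius_le_of_forall_card_le_three {S : Finset (EuclideanSpace ℝ (Fin 2))}
    (h : ∀ T ⊆ S, #T ≤ 3 → minEnclosingRadius T ≤ ρ) : minEnclosingRadius S ≤ ρ := by
  refine le_of_forall_pos_le_add fun ε hε ↦ ?_
  have hρ : 0 ≤ ρ := (minEnclosingRadius_nonneg ∅).trans <| by
    simpa using h ∅ (empty_subset S) (by simp)
  obtain ⟨c, hc⟩ := exists_forall_dist_le_of_forall_card_le (ρ := ρ + ε) fun T hT hcard ↦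
    exists_forall_dist_le_of_minEnclosingRadius_lt T.finite_toSet.isBounded <|
      (h T hT (by simpa [finrank_euclideanSpace_fin] using hcard)).trans_lt (by linarith)
  exact minEnclosingRadius_le_of_forall_dist_le (by linarith) hc

end minEnclosingRadius

theorem minEnclosingRadius_four_points (p₁ p₂ p₃ p₄ : EuclideanSpace ℝ (Fin 2)) :
    minEnclosingRadius {p₁, p₂, p₃, p₄} =
      max (max (minEnclosingRadius {p₂, p₃, p₄}) (minEnclosingRadius {p₁, p₃, p₄}))
        (max (minEnclosingRadius {p₁, p₂, p₄}) (minEnclosingRadius {p₁, p₂, p₃})) := by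
  classical
  set M := max (max (minEnclosingRadius {p₂, p₃, p₄}) (minEnclosingRadius {p₁, p₃, p₄}))
    (max (minEnclosingRadius {p₁, p₂, p₄}) (minEnclosingRadius {p₁, p₂, p₃}))
  have h₁ : minEnclosingRadius {p₂, p₃, p₄} ≤ M := le_max_of_le_left (le_max_left _ _)
  have h₂ : minEnclosingRadius {p₁, p₃, p₄} ≤ M := le_max_of_le_left (le_max_right _ _)
  have h₃ : minEnclosingRadius {p₁, p₂, p₄} ≤ M := le_max_of_le_right (le_max_left _ _)
  have h₄ : minEnclosingRadius {p₁, p₂, p₃} ≤ M := le_max_of_le_right (le_max_right _ _)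
  have h_triples : ∀ T ⊆ ({p₁, p₂, p₃, p₄} : Finset _), #T ≤ 3 → minEnclosingRadius T ≤ M := by
    intro T hT hcard
    have le_of_subset {U : Finset (EuclideanSpace ℝ (Fin 2))} (hTU : T ⊆ U)
        (hU : minEnclosingRadius U ≤ M) : minEnclosingRadius T ≤ M :=
      (minEnclosingRadius_mono (coe_subset.2 hTU) U.finite_toSet.isBounded).trans hU
    rcases subset_triple_of_subset_quadruple hT hcard with h | h | h | h
    exacts [le_of_subset h (by simpa using h₁), le_of_subset h (by simpa using h₂),
      le_of_subset h (by simpa using h₃), le_of_subset h (by simpa using h₄)]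
  refine le_antisymm ?_ (max_le (max_le ?_ ?_) (max_le ?_ ?_))
  · simpa using minEnclosingRadius_le_of_forall_card_le_three h_triples
  all_goals
    refine minEnclosingRadius_mono (fun x hx ↦ ?_) (Set.toFinite _).isBounded
    simp only [Set.mem_insert_iff, Set.mem_singleton_iff] at hx ⊢
    tauto
end
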